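/- arXiv:2102.11200 — 2 statements merged into one kernel-verified Lean document; each statement's English description precedes it below -/
import Mathlib

section
/- The set V_{J,η} of points α in the hyperplane e_J^⊥ ⊂ M_R such that α is (J,η)-generic and η is (J,α)-generic is the complement of finitely many hyperplanes in e_J^⊥; in particular it is open and dense in e_J^⊥. -/
inductive BTree (ι : Type) where
  | leaf : ι → BTree ι
  | node : BTree ι → BTree ι → BTree ι

namespace BTree

variable {ι : Type}

def leafList : BTree ι → List ι
  | .leaf i => [i]
  | .node l r => leafList l ++ leafList r

def leafSet [DecidableEq ι] (t : BTree ι) : Finset ι := t.leafList.toFinset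

def DecoratedBy [DecidableEq ι] (J : Finset ι) (t : BTree ι) : Prop :=
  t.leafList.Nodup ∧ t.leafSet = J

end BTree

def evalF {ι : Type} (θ : ι → ℝ) (S : Finset ι) : ℝ := ∑ i ∈ S, θ i

def pairS {ι : Type} (ω : ι → ι → ℝ) (S S' : Finset ι) : ℝ := ∑ i ∈ S, ∑ j ∈ S', ω i j

def iotaW {ι : Type} (ω : ι → ι → ℝ) (S : Finset ι) : ι → ℝ := fun j => ∑ i ∈ S, ω i j

/-- One step of the discrete attractor flow at a vertex with children `l, r`. -/
noncomputable def stepL {ι : Type} [DecidableEq ι] (ω : ι → ι → ℝ) (θp : ι → ℝ)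
    (l r : BTree ι) : ι → ℝ :=
  fun j => θp j -
    (evalF θp l.leafSet / pairS ω (l.leafSet ∪ r.leafSet) l.leafSet) *
      iotaW ω (l.leafSet ∪ r.leafSet) j

/-- `T ∈ 𝒯_J^η`: the tree is binary with `η(e_{v'}, e_{v''}) ≠ 0` for `v` the child
of the root, with children `v', v''`. -/
def Teta {ι : Type} [DecidableEq ι] (η : ι → ι → ℝ) (t : BTree ι) : Prop :=
  ∃ l r : BTree ι, t = .node l r ∧ pairS η l.leafSet r.leafSet ≠ 0

/-- `α ∈ e_J^⊥` is `(J,η)`-generic: for every `J`-decorated binary rooted tree in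
`𝒯_J^η`, `α(e_{v'}) ≠ 0` where `v` is the child of the root. -/
def JGeneric {ι : Type} [DecidableEq ι] (η : ι → ι → ℝ) (J : Finset ι) (α : ι → ℝ) : Prop :=
  ∀ t l r : BTree ι, t.DecoratedBy J → t = .node l r →
    pairS η l.leafSet r.leafSet ≠ 0 → evalF α l.leafSet ≠ 0

/-- `FlowNZ ω θp t`: along the discrete attractor flow for `ω` on the tree `t`
(with parent flow value `θp` at the top), at every interior vertex `v` one has
`θ_{p(v)}(e_{v'}) ≠ 0` and `θ_{p(v)}(e_{v''}) ≠ 0`. -/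
def FlowNZ {ι : Type} [DecidableEq ι] (ω : ι → ι → ℝ) : (ι → ℝ) → BTree ι → Prop
  | _, .leaf _ => True
  | θp, .node l r =>
      evalF θp l.leafSet ≠ 0 ∧ evalF θp r.leafSet ≠ 0 ∧
      FlowNZ ω (stepL ω θp l r) l ∧ FlowNZ ω (stepL ω θp l r) r

/-- `η` is `(J,α)`-generic: the flow for `η` started at `α` has nonvanishing values
`θ_{T,p(v)}(e_{v'}), θ_{T,p(v)}(e_{v''})` for every `T ∈ 𝒯_J^η` and interior `v`. -/
def EtaGenericAt {ι : Type} [DecidableEq ι] (η : ι → ι → ℝ) (J : Finset ι)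
    (α : ι → ℝ) : Prop :=
  ∀ t : BTree ι, t.DecoratedBy J → Teta η t → FlowNZ η α t

/-!
Every condition defining `V_{J,η}` says that a linear form in `α` is nonzero: the flow
`α ↦ θ_{T,v}` is linear in `α`, and there are only finitely many `J`-decorated trees. Each of
these forms is nonzero on `e_J^⊥`: for the form attached to an interior vertex `v`, pick leaves
`i` below `v'` and `j` below `v''`. Then `e_i - e_j ∈ e_J^⊥`, and at every ancestor `u` of `v` the
leaves `i, j` lie on the same side, so `θ_{p(u)}(e_{u'})` vanishes on `e_i - e_j` and the flow step
fixes it; hence the form takes the value `±1` on it. The complement of finitely many proper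
hyperplanes is open and dense.
-/

namespace BTree

variable {ι : Type}

lemma leafList_ne_nil : ∀ t : BTree ι, t.leafList ≠ []
  | .leaf _ => List.cons_ne_nil _ _
  | .node l _ => by simp [leafList, leafList_ne_nil l]

lemma finite_setOf_length_leafList_le [Finite ι] (n : ℕ) :
    {t : BTree ι | t.leafList.length ≤ n}.Finite := by
  induction n with
  | zero => simp [leafList_ne_nil]
  | succ n ih =>
    refine ((Set.finite_range leaf).union ((ih.prod ih).image fun p => node p.1 p.2)).subset ?_
    rintro (i | ⟨l, r⟩) h
    · exact Or.inl ⟨i, rfl⟩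
    · have hl := List.length_pos_iff.2 (leafList_ne_nil l)
      have hr := List.length_pos_iff.2 (leafList_ne_nil r)
      simp only [Set.mem_ofPred_eq, leafList, List.length_append] at h
      exact Or.inr ⟨(l, r), ⟨by simp only [Set.mem_ofPred_eq]; omega,
        by simp only [Set.mem_ofPred_eq]; omega⟩, rfl⟩

variable [DecidableEq ι]

lemma leafSet_node (l r : BTree ι) : (node l r).leafSet = l.leafSet ∪ r.leafSet := by
  simp [leafSet, leafList]

lemma leafSet_nonempty (t : BTree ι) : t.leafSet.Nonempty :=
  List.toFinset_nonempty_iff _ |>.2 t.leafList_ne_nil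

lemma disjoint_leafSet_of_nodup {l r : BTree ι} (h : (node l r).leafList.Nodup) :
    Disjoint l.leafSet r.leafSet :=
  List.disjoint_toFinset_iff_disjoint.2 (List.disjoint_of_nodup_append h)

lemma finite_setOf_decoratedBy [Finite ι] (J : Finset ι) :
    {t : BTree ι | t.DecoratedBy J}.Finite :=
  (finite_setOf_length_leafList_le J.card).subset fun t ⟨hnd, hJ⟩ => by
    rw [Set.mem_ofPred_eq, ← hJ, leafSet, List.toFinset_card_of_nodup hnd]

end BTree

section Flow

variable {ι : Type}

noncomputable def evalFₗ (S : Finset ι) : (ι → ℝ) →ₗ[ℝ] ℝ where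
  toFun θ := evalF θ S
  map_add' x y := by simp [evalF, Finset.sum_add_distrib]
  map_smul' c x := by simp [evalF, Finset.mul_sum]

@[simp] lemma evalFₗ_apply (S : Finset ι) (θ : ι → ℝ) : evalFₗ S θ = evalF θ S := rfl

variable [DecidableEq ι]

open BTree

noncomputable def stepLₗ (ω : ι → ι → ℝ) (l r : BTree ι) : (ι → ℝ) →ₗ[ℝ] (ι → ℝ) where
  toFun θ := stepL ω θ l r
  map_add' x y := by
    funext j
    simp only [stepL, evalF, Pi.add_apply, Finset.sum_add_distrib]
    ring
  map_smul' c x := by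
    funext j
    simp only [stepL, evalF, Pi.smul_apply, smul_eq_mul, RingHom.id_apply, ← Finset.mul_sum]
    ring

@[simp] lemma stepLₗ_apply (ω : ι → ι → ℝ) (l r : BTree ι) (θ : ι → ℝ) :
    stepLₗ ω l r θ = stepL ω θ l r := rfl

/-- The linear forms `α ↦ θ_{p(v)}(e_{v'})` and `α ↦ θ_{p(v)}(e_{v''})` over the interior
vertices `v` of `t`, where `Θ : α ↦ θ` is the flow into the parent of the root of `t`. -/
noncomputable def flowForms (ω : ι → ι → ℝ) :
    BTree ι → ((ι → ℝ) →ₗ[ℝ] (ι → ℝ)) → List ((ι → ℝ) →ₗ[ℝ] ℝ)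
  | .leaf _, _ => []
  | .node l r, Θ =>
      evalFₗ l.leafSet ∘ₗ Θ :: evalFₗ r.leafSet ∘ₗ Θ ::
        (flowForms ω l (stepLₗ ω l r ∘ₗ Θ) ++ flowForms ω r (stepLₗ ω l r ∘ₗ Θ))

lemma flowNZ_iff_forall_mem_flowForms (ω : ι → ι → ℝ) (t : BTree ι)
    (Θ : (ι → ℝ) →ₗ[ℝ] (ι → ℝ)) (α : ι → ℝ) :
    FlowNZ ω (Θ α) t ↔ ∀ g ∈ flowForms ω t Θ, g α ≠ 0 := by
  induction t generalizing Θ with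
  | leaf => simp [FlowNZ, flowForms]
  | node l r ihl ihr =>
    simp only [FlowNZ, flowForms, List.forall_mem_cons, List.forall_mem_append, ← ihl, ← ihr,
      LinearMap.comp_apply, stepLₗ_apply, evalFₗ_apply]

lemma evalF_single_sub_single (i j : ι) (S : Finset ι) :
    evalF (Pi.single i 1 - Pi.single j 1) S =
      (if i ∈ S then 1 else 0) - (if j ∈ S then 1 else 0) := by
  simp [evalF, Finset.sum_sub_distrib, Finset.sum_pi_single']

lemma stepL_of_evalF_eq_zero (ω : ι → ι → ℝ) {θ : ι → ℝ} {l : BTree ι} (r : BTree ι)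
    (h : evalF θ l.leafSet = 0) : stepL ω θ l r = θ := by
  funext j
  simp [stepL, h]

lemma stepL_single_sub_single (ω : ι → ι → ℝ) {i j : ι} {l : BTree ι} (r : BTree ι)
    (h : i ∈ l.leafSet ↔ j ∈ l.leafSet) :
    stepL ω (Pi.single i 1 - Pi.single j 1) l r = Pi.single i 1 - Pi.single j 1 :=
  stepL_of_evalF_eq_zero ω r <| by
    rw [evalF_single_sub_single]
    by_cases hi : i ∈ l.leafSet <;> simp_all

lemma exists_single_sub_single_ne_zero_of_mem_flowForms (ω : ι → ι → ℝ) {t : BTree ι}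
    (ht : t.leafList.Nodup) {Θ : (ι → ℝ) →ₗ[ℝ] (ι → ℝ)}
    (hΘ : ∀ i ∈ t.leafSet, ∀ j ∈ t.leafSet,
      Θ (Pi.single i 1 - Pi.single j 1) = Pi.single i 1 - Pi.single j 1) :
    ∀ g ∈ flowForms ω t Θ,
      ∃ i ∈ t.leafSet, ∃ j ∈ t.leafSet, g (Pi.single i 1 - Pi.single j 1) ≠ 0 := by
  induction t generalizing Θ with
  | leaf => simp [flowForms]
  | node l r ihl ihr =>
    have hdisj := disjoint_leafSet_of_nodup ht
    obtain ⟨hl, hr, -⟩ := List.nodup_append.1 ht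
    have hsubl : l.leafSet ⊆ (node l r).leafSet := leafSet_node l r ▸ Finset.subset_union_left
    have hsubr : r.leafSet ⊆ (node l r).leafSet := leafSet_node l r ▸ Finset.subset_union_right
    obtain ⟨i, hi⟩ := l.leafSet_nonempty
    obtain ⟨j, hj⟩ := r.leafSet_nonempty
    have hΘij := hΘ i (hsubl hi) j (hsubr hj)
    have hstep : ∀ i ∈ (node l r).leafSet, ∀ j ∈ (node l r).leafSet,
        (i ∈ l.leafSet ↔ j ∈ l.leafSet) →
        (stepLₗ ω l r ∘ₗ Θ) (Pi.single i 1 - Pi.single j 1) = Pi.single i 1 - Pi.single j 1 :=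
      fun i hi j hj hij => by
        rw [LinearMap.comp_apply, hΘ i hi j hj, stepLₗ_apply, stepL_single_sub_single ω r hij]
    simp only [flowForms, List.forall_mem_cons, List.forall_mem_append]
    refine ⟨⟨i, hsubl hi, j, hsubr hj, ?_⟩, ⟨i, hsubl hi, j, hsubr hj, ?_⟩, fun g hg => ?_,
      fun g hg => ?_⟩
    · simp [hΘij, evalF_single_sub_single, hi, hdisj.notMem_of_mem_right_finset hj]
    · simp [hΘij, evalF_single_sub_single, hj, hdisj.notMem_of_mem_left_finset hi]
    · obtain ⟨i, hi, j, hj, h⟩ := ihl hl (fun i hi j hj =>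
        hstep i (hsubl hi) j (hsubl hj) (iff_of_true hi hj)) g hg
      exact ⟨i, hsubl hi, j, hsubl hj, h⟩
    · obtain ⟨i, hi, j, hj, h⟩ := ihr hr (fun i hi j hj =>
        hstep i (hsubr hi) j (hsubr hj) (iff_of_false (hdisj.notMem_of_mem_right_finset hi)
          (hdisj.notMem_of_mem_right_finset hj))) g hg
      exact ⟨i, hsubr hi, j, hsubr hj, h⟩

end Flow

section Genericity

variable {ι : Type} [DecidableEq ι]

open BTree

lemma jGeneric_of_etaGenericAt {ω : ι → ι → ℝ} {J : Finset ι} {α : ι → ℝ}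
    (h : EtaGenericAt ω J α) : JGeneric ω J α := by
  rintro t l r ht rfl hlr
  exact (h _ ht ⟨l, r, rfl, hlr⟩).1

lemma exists_list_etaGenericAt_iff [Finite ι] (ω : ι → ι → ℝ) (J : Finset ι) :
    ∃ L : List ((ι → ℝ) →ₗ[ℝ] ℝ), (∀ g ∈ L, ∃ β ∈ LinearMap.ker (evalFₗ J), g β ≠ 0) ∧
      ∀ α, EtaGenericAt ω J α ↔ ∀ g ∈ L, g α ≠ 0 := by
  have hT : {t : BTree ι | t.DecoratedBy J ∧ Teta ω t}.Finite :=
    (finite_setOf_decoratedBy J).subset fun _ ht => ht.1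
  refine ⟨hT.toFinset.toList.flatMap (flowForms ω · LinearMap.id), ?_, fun α => ?_⟩
  · simp only [List.mem_flatMap, Finset.mem_toList, Set.Finite.mem_toFinset, Set.mem_ofPred_eq]
    rintro g ⟨t, ⟨⟨hnd, rfl⟩, -⟩, hg⟩
    obtain ⟨i, hi, j, hj, h⟩ :=
      exists_single_sub_single_ne_zero_of_mem_flowForms ω hnd (fun _ _ _ _ => rfl) g hg
    exact ⟨_, by simp [evalF_single_sub_single, hi, hj], h⟩
  · simp only [EtaGenericAt, List.forall_mem_flatMap, Finset.mem_toList, Set.Finite.mem_toFinset,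
      Set.mem_ofPred_eq, and_imp, ← flowNZ_iff_forall_mem_flowForms, LinearMap.id_apply]

end Genericity

section Hyperplanes

variable {V : Type*} [AddCommGroup V] [Module ℝ V] [TopologicalSpace V]
  [IsTopologicalAddGroup V] [ContinuousSMul ℝ V] (P : Submodule ℝ V)

lemma dense_setOf_apply_ne_zero {g : V →ₗ[ℝ] ℝ} (hg : ∃ β ∈ P, g β ≠ 0) :
    Dense {x : P | g x ≠ 0} := by
  have : interior (LinearMap.ker (g.domRestrict P) : Set P) = ∅ := by
    by_contra h
    obtain ⟨β, hβP, hβ⟩ := hg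
    have := Submodule.eq_top_of_nonempty_interior' _ (Set.nonempty_iff_ne_empty.2 h)
    exact hβ (LinearMap.ker_eq_top.1 this ▸ rfl : g.domRestrict P ⟨β, hβP⟩ = 0)
  exact interior_eq_empty_iff_dense_compl.1 this

lemma isOpen_setOf_apply_ne_zero [T2Space V] [FiniteDimensional ℝ V] (g : V →ₗ[ℝ] ℝ) :
    IsOpen {x : P | g x ≠ 0} :=
  isOpen_ne.preimage (g.continuous_of_finiteDimensional.comp continuous_subtype_val)

variable [T2Space V] [FiniteDimensional ℝ V] {κ : Type*} [Finite κ] (f : κ → V →ₗ[ℝ] ℝ)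

lemma isOpen_setOf_forall_apply_ne_zero : IsOpen {x : P | ∀ k, f k x ≠ 0} := by
  simpa only [Set.ofPred_forall] using
    isOpen_iInter_of_finite fun k => isOpen_setOf_apply_ne_zero P (f k)

lemma dense_setOf_forall_apply_ne_zero (hf : ∀ k, ∃ β ∈ P, f k β ≠ 0) :
    Dense {x : P | ∀ k, f k x ≠ 0} := by
  rw [Set.ofPred_forall, ← Set.sInter_range]
  exact (Set.finite_range _).dense_sInter
    (Set.forall_mem_range.2 fun k => isOpen_setOf_apply_ne_zero P (f k))
    (Set.forall_mem_range.2 fun k => dense_setOf_apply_ne_zero P (hf k))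

end Hyperplanes

theorem V_J_eta_open_dense_general {ι : Type} [Fintype ι] [DecidableEq ι]
    (η : ι → ι → ℤ) (J : Finset ι) :
    ∃ (n : ℕ) (f : Fin n → ((ι → ℝ) →ₗ[ℝ] ℝ)),
      (∀ k : Fin n, ∃ β : {θ : ι → ℝ // evalF θ J = 0}, f k β.1 ≠ 0) ∧
      (∀ α : {θ : ι → ℝ // evalF θ J = 0},
        (JGeneric (fun i j => (η i j : ℝ)) J α.1 ∧
          EtaGenericAt (fun i j => (η i j : ℝ)) J α.1) ↔ ∀ k : Fin n, f k α.1 ≠ 0) ∧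
      IsOpen {α : {θ : ι → ℝ // evalF θ J = 0} |
        JGeneric (fun i j => (η i j : ℝ)) J α.1 ∧
          EtaGenericAt (fun i j => (η i j : ℝ)) J α.1} ∧
      Dense {α : {θ : ι → ℝ // evalF θ J = 0} |
        JGeneric (fun i j => (η i j : ℝ)) J α.1 ∧
          EtaGenericAt (fun i j => (η i j : ℝ)) J α.1} := by
  obtain ⟨L, hwit, hL⟩ := exists_list_etaGenericAt_iff (fun i j => (η i j : ℝ)) J
  have hV : ∀ α : ι → ℝ, (JGeneric (fun i j => (η i j : ℝ)) J α ∧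
      EtaGenericAt (fun i j => (η i j : ℝ)) J α) ↔ ∀ k, L.get k α ≠ 0 := fun α =>
    (and_iff_right_of_imp jGeneric_of_etaGenericAt).trans ((hL α).trans List.forall_mem_iff_get)
  have hwit' : ∀ k, ∃ β ∈ LinearMap.ker (evalFₗ J), L.get k β ≠ 0 := fun k => hwit _ (L.get_mem k)
  refine ⟨L.length, L.get, fun k => ?_, fun α => hV α, ?_, ?_⟩
  · obtain ⟨β, hβ, hkβ⟩ := hwit' k
    exact ⟨⟨β, hβ⟩, hkβ⟩
  -- `↥(LinearMap.ker (evalFₗ J))` is definitionally the subtype `{θ // evalF θ J = 0}`.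
  · simp only [hV]
    exact isOpen_setOf_forall_apply_ne_zero (LinearMap.ker (evalFₗ J)) L.get
  · simp only [hV]
    exact dense_setOf_forall_apply_ne_zero _ L.get hwit'

/-- The set `V_{J,η}` of points `α` of the hyperplane `e_J^⊥` such that `α` is
`(J,η)`-generic and `η` is `(J,α)`-generic is the complement of finitely many
hyperplanes of `e_J^⊥`; in particular it is open and dense in `e_J^⊥`. -/
theorem V_J_eta_open_dense {ι : Type} [Fintype ι] [DecidableEq ι]
    (η : ι → ι → ℤ) (hη : ∀ i j, η j i = - η i j) (J : Finset ι) :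
    ∃ (n : ℕ) (f : Fin n → ((ι → ℝ) →ₗ[ℝ] ℝ)),
      (∀ k : Fin n, ∃ β : {θ : ι → ℝ // evalF θ J = 0}, f k β.1 ≠ 0) ∧
      (∀ α : {θ : ι → ℝ // evalF θ J = 0},
        (JGeneric (fun i j => (η i j : ℝ)) J α.1 ∧
          EtaGenericAt (fun i j => (η i j : ℝ)) J α.1) ↔ ∀ k : Fin n, f k α.1 ≠ 0) ∧
      IsOpen {α : {θ : ι → ℝ // evalF θ J = 0} |
        JGeneric (fun i j => (η i j : ℝ)) J α.1 ∧
          EtaGenericAt (fun i j => (η i j : ℝ)) J α.1} ∧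
      Dense {α : {θ : ι → ℝ // evalF θ J = 0} |
        JGeneric (fun i j => (η i j : ℝ)) J α.1 ∧
          EtaGenericAt (fun i j => (η i j : ℝ)) J α.1} :=
  V_J_eta_open_dense_general η J
end

section
/- Let g = ⊕_{n∈N^+} g_n be a finitely N^+-graded Lie algebra satisfying [g_{n_1}, g_{n_2}] = 0 whenever ⟨n_1, n_2⟩ = 0 for a skew-symmetric form ⟨−,−⟩. For primitive n̄ ∈ N^+, the subspace g_{n̄,0}^⊥ = ⊕_{⟨n̄,n⟩=0, n∉Z_{≥1}n̄} g_n is a Lie ideal of g_{n̄,0} = ⊕_{⟨n̄,n⟩=0} g_n, and the quotient g_{n̄,0}/g_{n̄,0}^⊥ is the abelian Lie algebra g_{n̄,0}^∥ = ⊕_{n∈Z_{≥1}n̄} g_n. -/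
/-- `N⁺`: nonzero elements of `N = ℤ^d` with nonnegative coordinates. -/
def NPlus (d : ℕ) : Set (Fin d → ℤ) := {n | (∀ i, 0 ≤ n i) ∧ n ≠ 0}

/-!
If `n + m = k • v` and `⟨v, m⟩ = 0`, then `⟨m, n⟩ = ⟨m, n + m⟩ = k ⟨m, v⟩ = 0`. Hence a bracket of
two homogeneous elements of `g_{v,0}` either vanishes (when its degree is a positive multiple
of `v`) or lands in `g_{v,0}^⊥`; bilinearity extends this to all of `g_{v,0}`. The splitting
`g_{v,0} = g_{v,0}^∥ ⊕ g_{v,0}^⊥` comes from the corresponding partition of the degrees together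
with the independence of the graded pieces.
-/

def positiveMultiples {M : Type*} [AddCommGroup M] (v : M) : Set M :=
  {n | ∃ k : ℤ, 1 ≤ k ∧ n = k • v}

section SkewForm

variable {M A : Type*} [AddCommGroup A] {B : M → M → A}

lemma apply_self_eq_zero_of_skew [IsAddTorsionFree A] (hskew : ∀ n m, B m n = -B n m) (n : M) :
    B n n = 0 :=
  self_eq_neg.mp (hskew n n)

variable [AddCommGroup M]

lemma apply_zsmul_right_of_map_add_right (hadd : ∀ n m m', B n (m + m') = B n m + B n m')
    (n m : M) (k : ℤ) : B n (k • m) = k • B n m :=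
  map_zsmul (AddMonoidHom.mk' (B n) (hadd n)) k m

variable [IsAddTorsionFree A]

lemma apply_eq_zero_of_add_eq_zsmul (hskew : ∀ n m, B m n = -B n m)
    (hadd : ∀ n m m', B n (m + m') = B n m + B n m') {v n m : M} {k : ℤ}
    (hm : B v m = 0) (hsum : n + m = k • v) : B n m = 0 := by
  have hmn : B m n = 0 := by
    have := hadd m n m
    rwa [hsum, apply_zsmul_right_of_map_add_right hadd, hskew v m, hm, neg_zero, smul_zero,
      apply_self_eq_zero_of_skew hskew, add_zero, eq_comm] at this
  rw [hskew m n, hmn, neg_zero]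

lemma positiveMultiples_subset_orthogonal (hskew : ∀ n m, B m n = -B n m)
    (hadd : ∀ n m m', B n (m + m') = B n m + B n m') (v : M) :
    positiveMultiples v ⊆ {n | B v n = 0} := by
  rintro n ⟨k, -, rfl⟩
  show B v (k • v) = 0
  rw [apply_zsmul_right_of_map_add_right hadd, apply_self_eq_zero_of_skew hskew, smul_zero]

end SkewForm

lemma lie_mem_of_mem_biSup {R L ι : Type*} [CommRing R] [LieRing L] [LieAlgebra R L]
    {g : ι → Submodule R L} {S T : Set ι} {P : Submodule R L}
    (h : ∀ n ∈ S, ∀ m ∈ T, ∀ x ∈ g n, ∀ y ∈ g m, ⁅x, y⁆ ∈ P) {x y : L}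
    (hx : x ∈ ⨆ n ∈ S, g n) (hy : y ∈ ⨆ m ∈ T, g m) : ⁅x, y⁆ ∈ P := by
  have hle : Submodule.map₂ (LieModule.toEnd R L L : L →ₗ[R] Module.End R L)
      (⨆ n ∈ S, g n) (⨆ m ∈ T, g m) ≤ P := by
    simp only [Submodule.map₂_iSup_left, Submodule.map₂_iSup_right, iSup_le_iff,
      Submodule.map₂_le]
    exact fun m hm n hn x hx y hy => h n hn m hm x hx y hy
  exact hle (Submodule.apply_mem_map₂ _ hx hy)

section Graded

variable {M A R L : Type*} [AddCommGroup M] [AddCommGroup A] [IsAddTorsionFree A] [CommRing R]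
  [LieRing L] [LieAlgebra R L] {B : M → M → A} {g : M → Submodule R L}

lemma lie_mem_perp_of_mem_orthogonal (hskew : ∀ n m, B m n = -B n m)
    (hadd : ∀ n m m', B n (m + m') = B n m + B n m')
    (hbr : ∀ n m (x y : L), x ∈ g n → y ∈ g m → ⁅x, y⁆ ∈ g (n + m))
    (hvanish : ∀ n m (x y : L), x ∈ g n → y ∈ g m → B n m = 0 → ⁅x, y⁆ = 0) (v : M) {x y : L}
    (hx : x ∈ ⨆ n ∈ {n | B v n = 0}, g n) (hy : y ∈ ⨆ n ∈ {n | B v n = 0}, g n) :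
    ⁅x, y⁆ ∈ ⨆ n ∈ {n | B v n = 0} \ positiveMultiples v, g n := by
  refine lie_mem_of_mem_biSup (fun n hn m hm a ha b hb => ?_) hx hy
  by_cases hpar : n + m ∈ positiveMultiples v
  · obtain ⟨k, -, hk⟩ := hpar
    rw [hvanish n m a b ha hb (apply_eq_zero_of_add_eq_zsmul hskew hadd hm hk)]
    exact Submodule.zero_mem _
  · have hperp : n + m ∈ {n | B v n = 0} \ positiveMultiples v := by
      refine ⟨?_, hpar⟩
      simp only [Set.mem_ofPred_eq] at hn hm ⊢
      rw [hadd, hn, hm, add_zero]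
    exact le_biSup g hperp (hbr n m a b ha hb)

end Graded

theorem graded_lie_algebra_parallel_perp_decomposition_general {d : ℕ}
    (B : (Fin d → ℤ) → (Fin d → ℤ) → ℝ)
    (hBskew : ∀ n m, B m n = - B n m)
    (hBadd₂ : ∀ n m m', B n (m + m') = B n m + B n m')
    {L : Type*} [LieRing L] [LieAlgebra ℚ L]
    (g : (Fin d → ℤ) → Submodule ℚ L)
    (hind : iSupIndep g)
    (hbr : ∀ n m (x y : L), x ∈ g n → y ∈ g m → ⁅x, y⁆ ∈ g (n + m))
    (hvanish : ∀ n m (x y : L), x ∈ g n → y ∈ g m → B n m = 0 → ⁅x, y⁆ = 0)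
    (nbar : Fin d → ℤ) :
    -- `g_{n̄,0}^⊥` is a Lie ideal of `g_{n̄,0}`:
    (∀ x y : L, x ∈ (⨆ n ∈ {n | B nbar n = 0}, g n) →
        y ∈ (⨆ n ∈ {n | B nbar n = 0 ∧ ¬∃ k : ℤ, 1 ≤ k ∧ n = k • nbar}, g n) →
        ⁅x, y⁆ ∈ (⨆ n ∈ {n | B nbar n = 0 ∧ ¬∃ k : ℤ, 1 ≤ k ∧ n = k • nbar}, g n)) ∧
    -- the quotient `g_{n̄,0}/g_{n̄,0}^⊥` is abelian:
    (∀ x y : L, x ∈ (⨆ n ∈ {n | B nbar n = 0}, g n) →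
        y ∈ (⨆ n ∈ {n | B nbar n = 0}, g n) →
        ⁅x, y⁆ ∈ (⨆ n ∈ {n | B nbar n = 0 ∧ ¬∃ k : ℤ, 1 ≤ k ∧ n = k • nbar}, g n)) ∧
    -- `g_{n̄,0} = g_{n̄,0}^∥ ⊕ g_{n̄,0}^⊥`, identifying the quotient with `g_{n̄,0}^∥`:
    ((⨆ n ∈ {n | ∃ k : ℤ, 1 ≤ k ∧ n = k • nbar}, g n) ⊔
        (⨆ n ∈ {n | B nbar n = 0 ∧ ¬∃ k : ℤ, 1 ≤ k ∧ n = k • nbar}, g n)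
      = (⨆ n ∈ {n | B nbar n = 0}, g n)) ∧
    ((⨆ n ∈ {n | ∃ k : ℤ, 1 ≤ k ∧ n = k • nbar}, g n) ⊓
        (⨆ n ∈ {n | B nbar n = 0 ∧ ¬∃ k : ℤ, 1 ≤ k ∧ n = k • nbar}, g n) = ⊥) := by
  have hbracket : ∀ x y : L, x ∈ (⨆ n ∈ {n | B nbar n = 0}, g n) →
      y ∈ (⨆ n ∈ {n | B nbar n = 0}, g n) →
      ⁅x, y⁆ ∈ ⨆ n ∈ {n | B nbar n = 0} \ positiveMultiples nbar, g n :=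
    fun _ _ hx hy => lie_mem_perp_of_mem_orthogonal hBskew hBadd₂ hbr hvanish nbar hx hy
  have hperp_le : (⨆ n ∈ {n | B nbar n = 0} \ positiveMultiples nbar, g n) ≤
      ⨆ n ∈ {n | B nbar n = 0}, g n :=
    biSup_mono fun _ hn => hn.1
  refine ⟨fun x y hx hy => hbracket x y hx (hperp_le hy), hbracket, ?_, ?_⟩
  · exact iSup_union.symm.trans (congrArg (fun s => ⨆ n ∈ s, g n)
      (Set.union_sdiff_cancel (positiveMultiples_subset_orthogonal hBskew hBadd₂ nbar)))
  · exact disjoint_iff.mp (hind.disjoint_biSup_biSup Set.disjoint_sdiff_right)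

/-- For a finitely `N⁺`-graded Lie algebra `g = ⊕ g_n` over `ℚ` with
`[g_{n₁}, g_{n₂}] = 0` whenever `⟨n₁, n₂⟩ = 0`, and a primitive `n̄ ∈ N⁺`:
`g_{n̄,0}^⊥ = ⊕_{⟨n̄,n⟩=0, n∉ℤ_{≥1}n̄} g_n` is a Lie ideal of
`g_{n̄,0} = ⊕_{⟨n̄,n⟩=0} g_n`, and the quotient `g_{n̄,0}/g_{n̄,0}^⊥` is the abelian
Lie algebra `g_{n̄,0}^∥ = ⊕_{n∈ℤ_{≥1}n̄} g_n`: all brackets of elements of `g_{n̄,0}`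
lie in `g_{n̄,0}^⊥`, and `g_{n̄,0} = g_{n̄,0}^∥ ⊕ g_{n̄,0}^⊥`. -/
theorem graded_lie_algebra_parallel_perp_decomposition {d : ℕ}
    (B : (Fin d → ℤ) → (Fin d → ℤ) → ℝ)
    (hBskew : ∀ n m, B m n = - B n m)
    (hBadd₁ : ∀ n m m', B (n + m) m' = B n m' + B m m')
    (hBadd₂ : ∀ n m m', B n (m + m') = B n m + B n m')
    {L : Type*} [LieRing L] [LieAlgebra ℚ L]
    (g : (Fin d → ℤ) → Submodule ℚ L)
    (hsupp : ∀ n, g n ≠ ⊥ → n ∈ NPlus d)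
    (hfin : {n | g n ≠ ⊥}.Finite)
    (hind : iSupIndep g)
    (hspan : (⨆ n, g n) = ⊤)
    (hbr : ∀ n m (x y : L), x ∈ g n → y ∈ g m → ⁅x, y⁆ ∈ g (n + m))
    (hvanish : ∀ n m (x y : L), x ∈ g n → y ∈ g m → B n m = 0 → ⁅x, y⁆ = 0)
    (nbar : Fin d → ℤ) (hnbar : nbar ∈ NPlus d)
    (hprim : ∀ (k : ℤ) (m : Fin d → ℤ), nbar = k • m → k = 1 ∨ k = -1) :
    -- `g_{n̄,0}^⊥` is a Lie ideal of `g_{n̄,0}`: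
    (∀ x y : L, x ∈ (⨆ n ∈ {n | B nbar n = 0}, g n) →
        y ∈ (⨆ n ∈ {n | B nbar n = 0 ∧ ¬∃ k : ℤ, 1 ≤ k ∧ n = k • nbar}, g n) →
        ⁅x, y⁆ ∈ (⨆ n ∈ {n | B nbar n = 0 ∧ ¬∃ k : ℤ, 1 ≤ k ∧ n = k • nbar}, g n)) ∧
    -- the quotient `g_{n̄,0}/g_{n̄,0}^⊥` is abelian:
    (∀ x y : L, x ∈ (⨆ n ∈ {n | B nbar n = 0}, g n) →
        y ∈ (⨆ n ∈ {n | B nbar n = 0}, g n) →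
        ⁅x, y⁆ ∈ (⨆ n ∈ {n | B nbar n = 0 ∧ ¬∃ k : ℤ, 1 ≤ k ∧ n = k • nbar}, g n)) ∧
    -- `g_{n̄,0} = g_{n̄,0}^∥ ⊕ g_{n̄,0}^⊥`, identifying the quotient with `g_{n̄,0}^∥`:
    ((⨆ n ∈ {n | ∃ k : ℤ, 1 ≤ k ∧ n = k • nbar}, g n) ⊔
        (⨆ n ∈ {n | B nbar n = 0 ∧ ¬∃ k : ℤ, 1 ≤ k ∧ n = k • nbar}, g n)
      = (⨆ n ∈ {n | B nbar n = 0}, g n)) ∧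
    ((⨆ n ∈ {n | ∃ k : ℤ, 1 ≤ k ∧ n = k • nbar}, g n) ⊓
        (⨆ n ∈ {n | B nbar n = 0 ∧ ¬∃ k : ℤ, 1 ≤ k ∧ n = k • nbar}, g n) = ⊥) :=
  graded_lie_algebra_parallel_perp_decomposition_general B hBskew hBadd₂ g hind hbr hvanish nbar
end
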